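/- arXiv:1303.5237 — 2 statements merged into one kernel-verified Lean document; each statement's English description precedes it below -/
import Mathlib

section
/- For the block lower bidiagonal matrix g with identity diagonal blocks and subdiagonal blocks g_2,...,g_N (g_1 := 0, g_{N+1} := 0), every eigenvalue λ of gᵀg satisfies λ ≥ min_k { 1 + σ_min(g_{k+1})² − σ_max(g_k) − σ_max(g_{k+1}) } whenever this minimum is nonnegative, and in any case λ ≥ max(0, min_k {1 + σ_min(g_{k+1})² − σ_max(g_k) − σ_max(g_{k+1})}). -/
open Matrix

/-- Block diagonal matrix with `N` diagonal blocks of size `n`. -/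
def blkDiag {N n : ℕ} (q : Fin N → Matrix (Fin n) (Fin n) ℝ) :
    Matrix (Fin N × Fin n) (Fin N × Fin n) ℝ :=
  fun p r => if p.1 = r.1 then q p.1 p.2 r.2 else 0

/-- Block lower bidiagonal matrix with identity diagonal blocks and subdiagonal
blocks; the block in position `(i, i-1)` (0-based) is `g (i+1)` (1-based paper index),
i.e. paper's `g_k` sits in (1-based) position `(k, k-1)` for `k = 2,…,N`. -/
def lowerBidiag (N n : ℕ) (g : ℕ → Matrix (Fin n) (Fin n) ℝ) :
    Matrix (Fin N × Fin n) (Fin N × Fin n) ℝ :=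
  fun p r =>
    if p.1 = r.1 then (if p.2 = r.2 then 1 else 0)
    else if (r.1 : ℕ) + 1 = (p.1 : ℕ) then g ((p.1 : ℕ) + 1) p.2 r.2
    else 0

theorem isHermitian_transpose_mul_self {m n α : Type*} [Fintype m] [CommSemiring α]
    [StarRing α] [TrivialStar α] (A : Matrix m n α) : (Aᵀ * A).IsHermitian := by
  rw [IsHermitian, conjTranspose_mul, conjTranspose_eq_transpose_of_trivial,
    conjTranspose_eq_transpose_of_trivial, transpose_transpose]

/-- Minimum eigenvalue of a Hermitian real matrix. -/
noncomputable def lamMin {ι : Type*} [Fintype ι] [DecidableEq ι]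
    (A : Matrix ι ι ℝ) (hA : A.IsHermitian) : ℝ := ⨅ i, hA.eigenvalues i

/-- Maximum eigenvalue of a Hermitian real matrix. -/
noncomputable def lamMax {ι : Type*} [Fintype ι] [DecidableEq ι]
    (A : Matrix ι ι ℝ) (hA : A.IsHermitian) : ℝ := ⨆ i, hA.eigenvalues i

/-- Minimum singular value: square root of the minimum eigenvalue of `Aᴴ * A`. -/
noncomputable def sigMin {ι : Type*} [Fintype ι] [DecidableEq ι]
    (A : Matrix ι ι ℝ) : ℝ :=
  Real.sqrt (lamMin (Aᴴ * A) (isHermitian_transpose_mul_self A))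

/-- Maximum singular value: square root of the maximum eigenvalue of `Aᴴ * A`. -/
noncomputable def sigMax {ι : Type*} [Fintype ι] [DecidableEq ι]
    (A : Matrix ι ι ℝ) : ℝ :=
  Real.sqrt (lamMax (Aᴴ * A) (isHermitian_transpose_mul_self A))

/-!
Split `x` into blocks `y_1, …, y_N` (and `y_0 := 0`), so that block `k` of `g x` is
`y_k + g_k y_{k-1}`. Cauchy–Schwarz and AM-GM give
`2 |⟨y_k, g_k y_{k-1}⟩| ≤ σ_max(g_k) (|y_{k-1}|² + |y_k|²)`, hence
`|y_k + g_k y_{k-1}|² ≥ |y_k|² + σ_min(g_k)² |y_{k-1}|² - σ_max(g_k) (|y_{k-1}|² + |y_k|²)`.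
Summing over `k` and collecting the coefficient of `|y_k|²` (from rows `k` and `k + 1`, where
`g_{N+1} = 0` makes row `N + 1` empty) gives
`|g x|² ≥ ∑_k (1 + σ_min(g_{k+1})² - σ_max(g_k) - σ_max(g_{k+1})) |y_k|² ≥ m |x|²`.
For a unit eigenvector `x` of `gᵀg` the left side is the eigenvalue `λ`, and `λ ≥ 0` anyway.
-/

namespace Matrix.IsHermitian

variable {ι : Type*} [Fintype ι] [DecidableEq ι] {A : Matrix ι ι ℝ} (hA : A.IsHermitian)

lemma dotProduct_mulVec_eigenvectorBasis (x : ι → ℝ) (i : ι) :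
    (A *ᵥ x) ⬝ᵥ hA.eigenvectorBasis i = hA.eigenvalues i * (x ⬝ᵥ hA.eigenvectorBasis i) := by
  rw [dotProduct_comm, dotProduct_mulVec, ← mulVec_transpose,
    ← conjTranspose_eq_transpose_of_trivial, hA.eq, mulVec_eigenvectorBasis, smul_dotProduct,
    smul_eq_mul, dotProduct_comm]

lemma dotProduct_self_eq_sum (x : ι → ℝ) :
    x ⬝ᵥ x = ∑ i, (x ⬝ᵥ hA.eigenvectorBasis i) ^ 2 := by
  have parseval :=
    hA.eigenvectorBasis.sum_inner_mul_inner (WithLp.toLp 2 x) (WithLp.toLp 2 x)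
  simp only [EuclideanSpace.inner_eq_star_dotProduct, star_trivial] at parseval
  rw [← parseval]
  simp [sq, dotProduct_comm]

lemma dotProduct_mulVec_eq_sum (x : ι → ℝ) :
    x ⬝ᵥ (A *ᵥ x) = ∑ i, hA.eigenvalues i * (x ⬝ᵥ hA.eigenvectorBasis i) ^ 2 := by
  have parseval :=
    hA.eigenvectorBasis.sum_inner_mul_inner (WithLp.toLp 2 x) (WithLp.toLp 2 (A *ᵥ x))
  simp only [EuclideanSpace.inner_eq_star_dotProduct, star_trivial] at parseval
  rw [dotProduct_comm, ← parseval]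
  refine Finset.sum_congr rfl fun i _ => ?_
  rw [dotProduct_mulVec_eigenvectorBasis, dotProduct_comm (hA.eigenvectorBasis i).ofLp]
  ring

lemma eigenvalues_eq_dotProduct_mulVec (i : ι) :
    hA.eigenvalues i = hA.eigenvectorBasis i ⬝ᵥ (A *ᵥ hA.eigenvectorBasis i) := by
  simpa using hA.eigenvalues_eq i

lemma dotProduct_self_eigenvectorBasis (i : ι) :
    hA.eigenvectorBasis i ⬝ᵥ hA.eigenvectorBasis i = 1 := by
  have h := real_inner_self_eq_norm_sq (hA.eigenvectorBasis i)
  rw [hA.eigenvectorBasis.orthonormal.1 i, EuclideanSpace.inner_eq_star_dotProduct] at h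
  simpa using h

lemma le_eigenvalues_of_forall_mul_dotProduct_le {c : ℝ}
    (h : ∀ x, c * (x ⬝ᵥ x) ≤ x ⬝ᵥ (A *ᵥ x)) (i : ι) : c ≤ hA.eigenvalues i := by
  simpa [hA.dotProduct_self_eigenvectorBasis, ← hA.eigenvalues_eq_dotProduct_mulVec] using
    h (hA.eigenvectorBasis i)

end Matrix.IsHermitian

lemma dotProduct_conjTranspose_mul_self_mulVec {ι : Type*} [Fintype ι] (B : Matrix ι ι ℝ)
    (u : ι → ℝ) : u ⬝ᵥ ((Bᴴ * B) *ᵥ u) = (B *ᵥ u) ⬝ᵥ (B *ᵥ u) := by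
  rw [← mulVec_mulVec, dotProduct_mulVec, vecMul_conjTranspose, star_trivial, star_trivial]

section SingularValues

variable {ι : Type*} [Fintype ι] [DecidableEq ι]

lemma lamMin_mul_dotProduct_le {A : Matrix ι ι ℝ} (hA : A.IsHermitian) (x : ι → ℝ) :
    lamMin A hA * (x ⬝ᵥ x) ≤ x ⬝ᵥ (A *ᵥ x) := by
  rw [hA.dotProduct_self_eq_sum, hA.dotProduct_mulVec_eq_sum, Finset.mul_sum]
  gcongr with i
  exact ciInf_le (Finite.bddBelow_range _) i

lemma dotProduct_mulVec_le_lamMax_mul {A : Matrix ι ι ℝ} (hA : A.IsHermitian) (x : ι → ℝ) :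
    x ⬝ᵥ (A *ᵥ x) ≤ lamMax A hA * (x ⬝ᵥ x) := by
  rw [hA.dotProduct_self_eq_sum, hA.dotProduct_mulVec_eq_sum, Finset.mul_sum]
  gcongr with i
  exact le_ciSup (Finite.bddAbove_range _) i

lemma lamMin_eq_zero {A : Matrix ι ι ℝ} (hA : A.IsHermitian) (h : A = 0) :
    lamMin A hA = 0 := by
  simp [lamMin, (hA.eigenvalues_eq_zero_iff).mpr h]

lemma lamMax_eq_zero {A : Matrix ι ι ℝ} (hA : A.IsHermitian) (h : A = 0) :
    lamMax A hA = 0 := by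
  simp [lamMax, (hA.eigenvalues_eq_zero_iff).mpr h]

lemma sigMin_sq_mul_le (B : Matrix ι ι ℝ) (u : ι → ℝ) :
    sigMin B ^ 2 * (u ⬝ᵥ u) ≤ (B *ᵥ u) ⬝ᵥ (B *ᵥ u) := by
  have h : 0 ≤ lamMin (Bᴴ * B) (isHermitian_transpose_mul_self B) :=
    Real.iInf_nonneg (eigenvalues_conjTranspose_mul_self_nonneg B)
  rw [sigMin, Real.sq_sqrt h, ← dotProduct_conjTranspose_mul_self_mulVec]
  exact lamMin_mul_dotProduct_le _ u

lemma le_sigMax_sq_mul (B : Matrix ι ι ℝ) (u : ι → ℝ) :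
    (B *ᵥ u) ⬝ᵥ (B *ᵥ u) ≤ sigMax B ^ 2 * (u ⬝ᵥ u) := by
  have h : 0 ≤ lamMax (Bᴴ * B) (isHermitian_transpose_mul_self B) :=
    Real.iSup_nonneg (eigenvalues_conjTranspose_mul_self_nonneg B)
  rw [sigMax, Real.sq_sqrt h, ← dotProduct_conjTranspose_mul_self_mulVec]
  exact dotProduct_mulVec_le_lamMax_mul _ u

lemma abs_two_mul_dotProduct_mulVec_le (B : Matrix ι ι ℝ) (u v : ι → ℝ) :
    |2 * (v ⬝ᵥ (B *ᵥ u))| ≤ sigMax B * (u ⬝ᵥ u + v ⬝ᵥ v) := by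
  have hu : 0 ≤ u ⬝ᵥ u := dotProduct_self_star_nonneg u
  have hv : 0 ≤ v ⬝ᵥ v := dotProduct_self_star_nonneg v
  have hcs : (v ⬝ᵥ (B *ᵥ u)) ^ 2 ≤ (v ⬝ᵥ v) * ((B *ᵥ u) ⬝ᵥ (B *ᵥ u)) := by
    simpa [dotProduct, sq] using Finset.sum_mul_sq_le_sq_mul_sq Finset.univ v (B *ᵥ u)
  refine abs_le_of_sq_le_sq ?_ (mul_nonneg (Real.sqrt_nonneg _) (add_nonneg hu hv))
  nlinarith [mul_le_mul_of_nonneg_left (le_sigMax_sq_mul B u) hv, sq_nonneg (u ⬝ᵥ u - v ⬝ᵥ v),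
    sq_nonneg (sigMax B)]

lemma sigMin_zero : sigMin (0 : Matrix ι ι ℝ) = 0 := by
  have h : lamMin ((0 : Matrix ι ι ℝ)ᴴ * 0) (isHermitian_transpose_mul_self 0) = 0 :=
    lamMin_eq_zero _ (by simp)
  rw [sigMin, h, Real.sqrt_zero]

lemma sigMax_zero : sigMax (0 : Matrix ι ι ℝ) = 0 := by
  have h : lamMax ((0 : Matrix ι ι ℝ)ᴴ * 0) (isHermitian_transpose_mul_self 0) = 0 :=
    lamMax_eq_zero _ (by simp)
  rw [sigMax, h, Real.sqrt_zero]

lemma le_dotProduct_self_add_mulVec (B : Matrix ι ι ℝ) (u w : ι → ℝ) :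
    w ⬝ᵥ w + sigMin B ^ 2 * (u ⬝ᵥ u) - sigMax B * (u ⬝ᵥ u + w ⬝ᵥ w) ≤
      (w + B *ᵥ u) ⬝ᵥ (w + B *ᵥ u) := by
  have hexp : (w + B *ᵥ u) ⬝ᵥ (w + B *ᵥ u) =
      w ⬝ᵥ w + 2 * (w ⬝ᵥ (B *ᵥ u)) + (B *ᵥ u) ⬝ᵥ (B *ᵥ u) := by
    simp only [add_dotProduct, dotProduct_add, dotProduct_comm (B *ᵥ u) w]
    ring
  rw [hexp]
  linarith [sigMin_sq_mul_le B u, neg_abs_le (2 * (w ⬝ᵥ (B *ᵥ u))),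
    abs_two_mul_dotProduct_mulVec_le B u w]

end SingularValues

lemma Finset.sum_range_mul_pred_eq {R : Type*} [NonUnitalNonAssocSemiring R]
    {f a : ℕ → R} {N : ℕ} (h1 : f 1 = 0) (hN : f (N + 1) = 0) :
    ∑ k ∈ Finset.range N, f (k + 1) * a (k - 1) = ∑ k ∈ Finset.range N, f (k + 2) * a k := by
  rcases N with _ | N
  · simp
  · rw [Finset.sum_range_succ', Finset.sum_range_succ, h1, hN]
    simp

section Blocks

variable {N n : ℕ}

-- `blockOf x k` is the block `y_{k+1}` of the header (0-based), padded by `0` for `k ≥ N`.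
def blockOf (x : Fin N × Fin n → ℝ) (k : ℕ) : Fin n → ℝ :=
  fun j => if h : k < N then x (⟨k, h⟩, j) else 0

lemma blockOf_fin (x : Fin N × Fin n → ℝ) (k : Fin N) (j : Fin n) :
    blockOf x k j = x (k, j) := by
  simp [blockOf]

lemma dotProduct_self_eq_sum_blockOf (x : Fin N × Fin n → ℝ) :
    x ⬝ᵥ x = ∑ k ∈ Finset.range N, blockOf x k ⬝ᵥ blockOf x k := by
  rw [← Fin.sum_univ_eq_sum_range (fun k => blockOf x k ⬝ᵥ blockOf x k), dotProduct,
    Fintype.sum_prod_type]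
  simp [dotProduct, blockOf_fin]

-- For `k = 0` the truncated `k - 1` points at block `0`, which `g 1 = 0` then discards.
lemma lowerBidiag_mulVec_apply {g : ℕ → Matrix (Fin n) (Fin n) ℝ} (hg1 : g 1 = 0)
    (x : Fin N × Fin n → ℝ) (k : Fin N) (j : Fin n) :
    (lowerBidiag N n g *ᵥ x) (k, j) = blockOf x k j + (g (k + 1) *ᵥ blockOf x (k - 1)) j := by
  have hsplit : ∀ l : Fin N, ∑ o, lowerBidiag N n g (k, j) (l, o) * x (l, o) =
      (if k = l then x (k, j) else 0) +
        if (l : ℕ) + 1 = k then (g (k + 1) *ᵥ fun o => x (l, o)) j else 0 := by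
    intro l
    by_cases hkl : k = l
    · subst hkl
      simp [lowerBidiag, ite_mul]
    · by_cases hl : (l : ℕ) + 1 = k <;> simp [lowerBidiag, hkl, hl, mulVec, dotProduct]
  rw [mulVec, dotProduct, Fintype.sum_prod_type, Finset.sum_congr rfl fun l _ => hsplit l,
    Finset.sum_add_distrib, Finset.sum_ite_eq, blockOf_fin]
  simp only [Finset.mem_univ, if_true, add_right_inj]
  rcases k with ⟨_ | k, hk⟩
  · simp [hg1]
  · have hl : ∀ l : Fin N, (l : ℕ) + 1 = k + 1 ↔ (⟨k, by omega⟩ : Fin N) = l := by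
      intro l; rw [Fin.ext_iff]; simp only; omega
    simp only [hl, Finset.sum_ite_eq, Finset.mem_univ, if_true]
    congr 2
    ext o
    exact (blockOf_fin x ⟨k, by omega⟩ o).symm

lemma blockOf_lowerBidiag_mulVec {g : ℕ → Matrix (Fin n) (Fin n) ℝ} (hg1 : g 1 = 0)
    (x : Fin N × Fin n → ℝ) {k : ℕ} (hk : k < N) :
    blockOf (lowerBidiag N n g *ᵥ x) k = blockOf x k + g (k + 1) *ᵥ blockOf x (k - 1) := by
  ext j
  rw [Pi.add_apply, ← lowerBidiag_mulVec_apply hg1 x ⟨k, hk⟩]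
  exact blockOf_fin _ ⟨k, hk⟩ j

lemma mul_dotProduct_self_le_lowerBidiag_mulVec {g : ℕ → Matrix (Fin n) (Fin n) ℝ}
    (hg1 : g 1 = 0) (hgN1 : g (N + 1) = 0) {m : ℝ}
    (hm : ∀ k ∈ Finset.Icc 1 N,
      m ≤ 1 + sigMin (g (k + 1)) ^ 2 - sigMax (g k) - sigMax (g (k + 1)))
    (x : Fin N × Fin n → ℝ) :
    m * (x ⬝ᵥ x) ≤ (lowerBidiag N n g *ᵥ x) ⬝ᵥ (lowerBidiag N n g *ᵥ x) := by
  set y := blockOf x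
  set a : ℕ → ℝ := fun k => y k ⬝ᵥ y k
  set σ : ℕ → ℝ := fun k => sigMax (g k)
  set f : ℕ → ℝ := fun k => sigMin (g k) ^ 2 - σ k
  have hshift := Finset.sum_range_mul_pred_eq (f := f) (a := a) (N := N)
    (by simp [f, σ, hg1, sigMin_zero, sigMax_zero])
    (by simp [f, σ, hgN1, sigMin_zero, sigMax_zero])
  calc m * (x ⬝ᵥ x) = ∑ k ∈ Finset.range N, m * a k := by
        rw [dotProduct_self_eq_sum_blockOf, Finset.mul_sum]
    _ ≤ ∑ k ∈ Finset.range N, (1 - σ (k + 1) + f (k + 2)) * a k := by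
        refine Finset.sum_le_sum fun k hk => mul_le_mul_of_nonneg_right ?_ ?_
        · have := hm (k + 1) (by simp at hk ⊢; omega)
          simp only [f, σ]
          linarith
        · exact dotProduct_self_star_nonneg (y k)
    _ = ∑ k ∈ Finset.range N, ((1 - σ (k + 1)) * a k + f (k + 1) * a (k - 1)) := by
        rw [Finset.sum_add_distrib, hshift, ← Finset.sum_add_distrib]
        exact Finset.sum_congr rfl fun k _ => by ring
    _ ≤ ∑ k ∈ Finset.range N,
          (y k + g (k + 1) *ᵥ y (k - 1)) ⬝ᵥ (y k + g (k + 1) *ᵥ y (k - 1)) := by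
        refine Finset.sum_le_sum fun k _ => ?_
        have := le_dotProduct_self_add_mulVec (g (k + 1)) (y (k - 1)) (y k)
        simp only [a, f, σ]
        linarith
    _ = (lowerBidiag N n g *ᵥ x) ⬝ᵥ (lowerBidiag N n g *ᵥ x) := by
        rw [dotProduct_self_eq_sum_blockOf]
        exact Finset.sum_congr rfl fun k hk => by
          rw [blockOf_lowerBidiag_mulVec hg1 x (Finset.mem_range.mp hk)]

end Blocks

theorem stmt2_general (N n : ℕ)
    (g : ℕ → Matrix (Fin n) (Fin n) ℝ)
    (hg1 : g 1 = 0) (hgN1 : g (N + 1) = 0)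
    (G : Matrix (Fin N × Fin n) (Fin N × Fin n) ℝ) (hGdef : G = lowerBidiag N n g)
    (hne : (Finset.Icc 1 N).Nonempty)
    (m : ℝ)
    (hm : m = (Finset.Icc 1 N).inf' hne
        (fun k => 1 + sigMin (g (k + 1)) ^ 2 - sigMax (g k) - sigMax (g (k + 1)))) :
    (∀ i, max 0 m ≤ (isHermitian_transpose_mul_self G).eigenvalues i) ∧
      (0 ≤ m → ∀ i, m ≤ (isHermitian_transpose_mul_self G).eigenvalues i) := by
  have hm_le : ∀ k ∈ Finset.Icc 1 N,
      m ≤ 1 + sigMin (g (k + 1)) ^ 2 - sigMax (g k) - sigMax (g (k + 1)) :=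
    fun k hk => hm ▸ Finset.inf'_le _ hk
  have hbound (i) : m ≤ (isHermitian_transpose_mul_self G).eigenvalues i := by
    refine (isHermitian_transpose_mul_self G).le_eigenvalues_of_forall_mul_dotProduct_le
      (fun x => ?_) i
    calc m * (x ⬝ᵥ x) ≤ (G *ᵥ x) ⬝ᵥ (G *ᵥ x) :=
          hGdef ▸ mul_dotProduct_self_le_lowerBidiag_mulVec hg1 hgN1 hm_le x
      _ = x ⬝ᵥ ((Gᵀ * G) *ᵥ x) := (dotProduct_conjTranspose_mul_self_mulVec G x).symm
  exact ⟨fun i => max_le (eigenvalues_conjTranspose_mul_self_nonneg G i) (hbound i),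
    fun _ => hbound⟩

/-- Every eigenvalue `λ` of `gᵀg` satisfies
`λ ≥ max(0, min_{1 ≤ k ≤ N} { 1 + σ_min(g_{k+1})² − σ_max(g_k) − σ_max(g_{k+1}) })`
(with conventions `g_1 = 0`, `g_{N+1} = 0`); in particular `λ` is at least the minimum
whenever the minimum is nonnegative. -/
theorem stmt2 (N n : ℕ) [NeZero N] [NeZero n]
    (g : ℕ → Matrix (Fin n) (Fin n) ℝ)
    (hg1 : g 1 = 0) (hgN1 : g (N + 1) = 0)
    (G : Matrix (Fin N × Fin n) (Fin N × Fin n) ℝ) (hGdef : G = lowerBidiag N n g)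
    (hne : (Finset.Icc 1 N).Nonempty)
    (m : ℝ)
    (hm : m = (Finset.Icc 1 N).inf' hne
        (fun k => 1 + sigMin (g (k + 1)) ^ 2 - sigMax (g k) - sigMax (g (k + 1)))) :
    (∀ i, max 0 m ≤ (isHermitian_transpose_mul_self G).eigenvalues i) ∧
      (0 ≤ m → ∀ i, m ≤ (isHermitian_transpose_mul_self G).eigenvalues i) :=
  stmt2_general N n g hg1 hgN1 G hGdef hne m hm
end

section
/- Let A be a symmetric positive definite block tridiagonal matrix with diagonal blocks b_1,...,b_N and subdiagonal blocks c_2,...,c_N, with 0 < α_L ≤ λ_min(A) and λ_max(A) ≤ α_U. Define the backward recursion d_N = b_N and d_k = b_k − c_{k+1}ᵀ d_{k+1}⁻¹ c_{k+1} for k = N−1,...,1. Then every d_k is symmetric positive definite with α_L ≤ λ_min(d_k) ≤ λ_max(d_k) ≤ α_U. -/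
open Matrix

/-- Symmetric block tridiagonal matrix with `N` diagonal blocks `b 0, …, b (N-1)` of size
`n`, subdiagonal blocks `c i` in (0-based) position `(i, i-1)` for `i = 1,…,N-1`, and the
transposes `(c (i+1))ᵀ` in position `(i, i+1)`. -/
def blockTri (N n : ℕ) (b c : ℕ → Matrix (Fin n) (Fin n) ℝ) :
    Matrix (Fin N × Fin n) (Fin N × Fin n) ℝ :=
  fun p r =>
    if p.1 = r.1 then b (p.1 : ℕ) p.2 r.2
    else if (r.1 : ℕ) + 1 = (p.1 : ℕ) then c (p.1 : ℕ) p.2 r.2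
    else if (p.1 : ℕ) + 1 = (r.1 : ℕ) then c (r.1 : ℕ) r.2 p.2
    else 0

/-- Forward (Thomas) block elimination: `d 0 = b 0`,
`d (k+1) = b (k+1) − c (k+1) (d k)⁻¹ (c (k+1))ᵀ`. -/
noncomputable def fwdD {n : ℕ} (b c : ℕ → Matrix (Fin n) (Fin n) ℝ) :
    ℕ → Matrix (Fin n) (Fin n) ℝ
  | 0 => b 0
  | k + 1 => b (k + 1) - c (k + 1) * (fwdD b c k)⁻¹ * (c (k + 1))ᵀ

/-- Auxiliary backward elimination sequence: `bwdAux N b c j` is the backward Schur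
complement at block index `N - 1 - j`. -/
noncomputable def bwdAux {n : ℕ} (N : ℕ) (b c : ℕ → Matrix (Fin n) (Fin n) ℝ) :
    ℕ → Matrix (Fin n) (Fin n) ℝ
  | 0 => b (N - 1)
  | j + 1 => b (N - 1 - (j + 1)) - (c (N - 1 - j))ᵀ * (bwdAux N b c j)⁻¹ * c (N - 1 - j)

/-- Backward block elimination: `bwdD N b c (N-1) = b (N-1)` and
`bwdD N b c k = b k − (c (k+1))ᵀ (bwdD N b c (k+1))⁻¹ (c (k+1))` for `k < N-1`. -/
noncomputable def bwdD {n : ℕ} (N : ℕ) (b c : ℕ → Matrix (Fin n) (Fin n) ℝ) (k : ℕ) :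
    Matrix (Fin n) (Fin n) ℝ :=
  bwdAux N b c (N - 1 - k)

/-- Forward elimination of the right-hand side: `s 0 = r 0`,
`s (k+1) = r (k+1) − c (k+1) (d k)⁻¹ s k`. -/
noncomputable def fwdS {n : ℕ} (b c : ℕ → Matrix (Fin n) (Fin n) ℝ)
    (r : ℕ → Fin n → ℝ) : ℕ → Fin n → ℝ
  | 0 => r 0
  | k + 1 => r (k + 1) - (c (k + 1) * (fwdD b c k)⁻¹) *ᵥ (fwdS b c r k)

/-- Auxiliary backward elimination of the right-hand side. -/
noncomputable def bwdSAux {n : ℕ} (N : ℕ) (b c : ℕ → Matrix (Fin n) (Fin n) ℝ)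
    (r : ℕ → Fin n → ℝ) : ℕ → Fin n → ℝ
  | 0 => r (N - 1)
  | j + 1 => r (N - 1 - (j + 1)) -
      ((c (N - 1 - j))ᵀ * (bwdAux N b c j)⁻¹) *ᵥ (bwdSAux N b c r j)

/-- Backward elimination of the right-hand side:
`bwdS N b c r k = r k − (c (k+1))ᵀ (bwdD N b c (k+1))⁻¹ (bwdS N b c r (k+1))`. -/
noncomputable def bwdS {n : ℕ} (N : ℕ) (b c : ℕ → Matrix (Fin n) (Fin n) ℝ)
    (r : ℕ → Fin n → ℝ) (k : ℕ) : Fin n → ℝ :=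
  bwdSAux N b c r (N - 1 - k)

/-! The upper bound is the easy half: `x ⬝ᵥ d_k x ≤ x ⬝ᵥ b_k x` because the subtracted term
`c_{k+1}ᵀ d_{k+1}⁻¹ c_{k+1}` is positive semidefinite (inductively, `d_{k+1}` is positive
definite), and `x ⬝ᵥ b_k x` is the quadratic form of `A` at `x` placed in block `k`.

For the lower bound, extend `x` by zero in the blocks `j < k` and by
`e_{j+1} = -d_{j+1}⁻¹ c_{j+1} e_j` in the blocks `j > k`. Then `A e` vanishes in the blocks
`> k` and equals `d_k x` in block `k`, so `x ⬝ᵥ d_k x = e ⬝ᵥ A e ≥ α_L |e|² ≥ α_L |x|²`.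

Bounds on a quadratic form and on the eigenvalues are equivalent through the Loewner order,
`a • 1 ≤ M ↔ spectrum ℝ M ⊆ [a, ∞)`. -/

open scoped MatrixOrder in
theorem Matrix.IsHermitian.le_eigenvalues_iff {ι : Type*} [Fintype ι] [DecidableEq ι]
    {M : Matrix ι ι ℝ} (hM : M.IsHermitian) (a : ℝ) :
    (∀ i, a ≤ hM.eigenvalues i) ↔ ∀ x, a * (x ⬝ᵥ x) ≤ x ⬝ᵥ (M *ᵥ x) := by
  rw [← Set.forall_mem_range (p := (a ≤ ·)), ← hM.spectrum_real_eq_range_eigenvalues,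
    ← algebraMap_le_iff_le_spectrum (R := ℝ), Matrix.le_iff, posSemidef_iff_dotProduct_mulVec,
    Algebra.algebraMap_eq_smul_one,
    and_iff_right (hM.sub (isHermitian_one.smul (IsSelfAdjoint.all a)))]
  simp [sub_mulVec, smul_mulVec, sub_nonneg]

open scoped MatrixOrder in
theorem Matrix.IsHermitian.eigenvalues_le_iff {ι : Type*} [Fintype ι] [DecidableEq ι]
    {M : Matrix ι ι ℝ} (hM : M.IsHermitian) (a : ℝ) :
    (∀ i, hM.eigenvalues i ≤ a) ↔ ∀ x, x ⬝ᵥ (M *ᵥ x) ≤ a * (x ⬝ᵥ x) := by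
  rw [← Set.forall_mem_range (p := (· ≤ a)), ← hM.spectrum_real_eq_range_eigenvalues,
    ← le_algebraMap_iff_spectrum_le (R := ℝ), Matrix.le_iff, posSemidef_iff_dotProduct_mulVec,
    Algebra.algebraMap_eq_smul_one,
    and_iff_right ((isHermitian_one.smul (IsSelfAdjoint.all a)).sub hM)]
  simp [sub_mulVec, smul_mulVec, sub_nonneg]

theorem Function.uncurry_dotProduct {α β R : Type*} [Fintype α] [Fintype β]
    [NonUnitalNonAssocSemiring R] (V : α → β → R) (w : α × β → R) :
    Function.uncurry V ⬝ᵥ w = ∑ i, V i ⬝ᵥ Function.curry w i :=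
  Fintype.sum_prod_type _

theorem Fin.sum_univ_ite_val_eq {M : Type*} [AddCommMonoid M] {N : ℕ} (a : ℕ) (x : M) :
    ∑ j : Fin N, (if (j : ℕ) = a then x else 0) = if a < N then x else 0 := by
  simp [Fin.sum_univ_eq_sum_range (fun j => if j = a then x else 0)]

def blockVec (N : ℕ) {n : ℕ} (V : ℕ → Fin n → ℝ) : Fin N × Fin n → ℝ :=
  Function.uncurry fun i : Fin N => V i

noncomputable def schurExtension {n : ℕ} (N : ℕ) (b c : ℕ → Matrix (Fin n) (Fin n) ℝ) (k : ℕ)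
    (x : Fin n → ℝ) : ℕ → Fin n → ℝ
  | 0 => if k = 0 then x else 0
  | j + 1 => if k = j + 1 then x else
      -((bwdD N b c (j + 1))⁻¹ *ᵥ (c (j + 1) *ᵥ schurExtension N b c k x j))

section BlockTridiagonal

variable {N n : ℕ} {b c : ℕ → Matrix (Fin n) (Fin n) ℝ}

theorem blockTri_mulVec_blockVec (V : ℕ → Fin n → ℝ) (i : Fin N) :
    Function.curry (blockTri N n b c *ᵥ blockVec N V) i =
      b i *ᵥ V i + (if (i : ℕ) + 1 < N then (c (i + 1))ᵀ *ᵥ V (i + 1) else 0)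
        + (if 0 < (i : ℕ) then c i *ᵥ V (i - 1) else 0) := by
  have hblock : ∀ j : Fin N, (fun p => ∑ q, blockTri N n b c (i, p) (j, q) * V j q) =
      (if (j : ℕ) = i then b i *ᵥ V i else 0)
      + (if (j : ℕ) = i + 1 then (c (i + 1))ᵀ *ᵥ V (i + 1) else 0)
      + (if 0 < (i : ℕ) ∧ (j : ℕ) = i - 1 then c i *ᵥ V (i - 1) else 0) := by
    intro j
    funext p
    simp only [blockTri, Fin.ext_iff]
    split_ifs <;>
      simp only [add_zero, zero_add, Pi.add_apply, Pi.zero_apply, mulVec, dotProduct,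
        transpose_apply, zero_mul, Finset.sum_const_zero] <;>
      first | omega | (congr! <;> omega)
  have hsum : Function.curry (blockTri N n b c *ᵥ blockVec N V) i =
      ∑ j : Fin N, fun p => ∑ q, blockTri N n b c (i, p) (j, q) * V j q := by
    funext p
    simp only [Function.curry_apply, mulVec, dotProduct, Fintype.sum_prod_type, blockVec,
      Function.uncurry_apply_pair, Finset.sum_apply]
  rw [hsum, Finset.sum_congr rfl fun j _ => hblock j]
  simp only [Finset.sum_add_distrib, ite_and, Finset.sum_ite_irrel, Finset.sum_const_zero,
    Fin.sum_univ_ite_val_eq, if_pos i.isLt]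
  congr 1
  split_ifs <;> first | rfl | omega

theorem bwdD_last : bwdD N b c (N - 1) = b (N - 1) := by
  rw [bwdD, Nat.sub_self, bwdAux]

theorem bwdD_of_succ_lt {k : ℕ} (hk : k + 1 < N) :
    bwdD N b c k = b k - (c (k + 1))ᵀ * (bwdD N b c (k + 1))⁻¹ * c (k + 1) := by
  obtain ⟨j, hj⟩ : ∃ j, N - 1 - k = j + 1 := ⟨N - 1 - (k + 1), by omega⟩
  rw [bwdD, bwdD, hj, bwdAux, show N - 1 - (j + 1) = k by omega, show N - 1 - j = k + 1 by omega,
    show N - 1 - (k + 1) = j by omega]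

theorem isHermitian_of_isHermitian_blockTri (hA : (blockTri N n b c).IsHermitian) {k : ℕ}
    (hk : k < N) : (b k).IsHermitian := by
  ext p q
  simpa [blockTri] using congrFun (congrFun hA (⟨k, hk⟩, p)) (⟨k, hk⟩, q)

theorem isHermitian_bwdD (hA : (blockTri N n b c).IsHermitian) {k : ℕ} (hk : k < N)
    (hsucc : k + 1 < N → (bwdD N b c (k + 1)).IsHermitian) : (bwdD N b c k).IsHermitian := by
  rcases lt_or_ge (k + 1) N with hlt | hge
  · rw [bwdD_of_succ_lt hlt, ← conjTranspose_eq_transpose_of_trivial]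
    exact (isHermitian_of_isHermitian_blockTri hA hk).sub
      (isHermitian_conjTranspose_mul_mul _ (hsucc hlt).inv)
  · rw [show k = N - 1 by omega, bwdD_last]
    exact isHermitian_of_isHermitian_blockTri hA (by omega)

theorem dotProduct_bwdD_mulVec_le_dotProduct_mulVec {k : ℕ} (hk : k < N)
    (hsucc : k + 1 < N → (bwdD N b c (k + 1)).PosDef) (x : Fin n → ℝ) :
    x ⬝ᵥ (bwdD N b c k *ᵥ x) ≤ x ⬝ᵥ (b k *ᵥ x) := by
  rcases lt_or_ge (k + 1) N with hlt | hge
  · have hpsd := ((hsucc hlt).inv.posSemidef.conjTranspose_mul_mul_same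
      (c (k + 1))).dotProduct_mulVec_nonneg x
    rw [conjTranspose_eq_transpose_of_trivial, star_trivial] at hpsd
    rw [bwdD_of_succ_lt hlt, sub_mulVec, dotProduct_sub]
    linarith
  · rw [show k = N - 1 by omega, bwdD_last]

theorem blockVec_single_dotProduct_blockTri_mulVec {k : ℕ} (hk : k < N) (x : Fin n → ℝ) :
    blockVec N (Pi.single k x) ⬝ᵥ (blockTri N n b c *ᵥ blockVec N (Pi.single k x)) =
      x ⬝ᵥ (b k *ᵥ x) := by
  rw [blockVec, Function.uncurry_dotProduct, Finset.sum_eq_single ⟨k, hk⟩]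
  · rw [← blockVec, blockTri_mulVec_blockVec]
    simp (disch := omega) [Pi.single_eq_of_ne]
  · intro i _ hi
    rw [Pi.single_eq_of_ne (fun h => hi (Fin.ext h)), zero_dotProduct]
  · simp

theorem blockVec_single_dotProduct_self {k : ℕ} (hk : k < N) (x : Fin n → ℝ) :
    blockVec N (Pi.single k x) ⬝ᵥ blockVec N (Pi.single k x) = x ⬝ᵥ x := by
  rw [blockVec, Function.uncurry_dotProduct, Finset.sum_eq_single ⟨k, hk⟩]
  · simp
  · intro i _ hi
    rw [Pi.single_eq_of_ne (fun h => hi (Fin.ext h)), zero_dotProduct]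
  · simp

section SchurExtension

variable {k : ℕ} {x : Fin n → ℝ}

theorem schurExtension_of_lt {j : ℕ} (h : j < k) : schurExtension N b c k x j = 0 := by
  induction j with
  | zero => simp [schurExtension]; omega
  | succ j ih => simp [schurExtension, ih (by omega)]; omega

theorem schurExtension_self : schurExtension N b c k x k = x := by
  cases k <;> simp [schurExtension]

theorem schurExtension_succ {j : ℕ} (h : k ≤ j) : schurExtension N b c k x (j + 1) =
    -((bwdD N b c (j + 1))⁻¹ *ᵥ (c (j + 1) *ᵥ schurExtension N b c k x j)) := by
  rw [schurExtension, if_neg (by omega)]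

theorem curry_blockTri_mulVec_schurExtension {i : Fin N} (hki : k ≤ i) :
    Function.curry (blockTri N n b c *ᵥ blockVec N (schurExtension N b c k x)) i =
      bwdD N b c i *ᵥ schurExtension N b c k x i
        + (if 0 < (i : ℕ) then c i *ᵥ schurExtension N b c k x (i - 1) else 0) := by
  rw [blockTri_mulVec_blockVec]
  congr 1
  split_ifs with h
  · rw [schurExtension_succ hki, bwdD_of_succ_lt h, sub_mulVec, mulVec_neg, mulVec_mulVec,
      mulVec_mulVec, Matrix.mul_assoc, sub_eq_add_neg]
  · rw [show (i : ℕ) = N - 1 by omega, bwdD_last, add_zero]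

theorem curry_blockTri_mulVec_schurExtension_self (hk : k < N) :
    Function.curry (blockTri N n b c *ᵥ blockVec N (schurExtension N b c k x)) ⟨k, hk⟩ =
      bwdD N b c k *ᵥ x := by
  rw [curry_blockTri_mulVec_schurExtension (i := ⟨k, hk⟩) le_rfl]
  dsimp only
  rw [schurExtension_self]
  split_ifs with hk₀
  · rw [schurExtension_of_lt (j := k - 1) (by omega), mulVec_zero, add_zero]
  · rw [add_zero]

theorem curry_blockTri_mulVec_schurExtension_of_lt {i : Fin N} (hki : k < i)
    (hi : IsUnit (bwdD N b c i)) :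
    Function.curry (blockTri N n b c *ᵥ blockVec N (schurExtension N b c k x)) i = 0 := by
  obtain ⟨j, hj⟩ : ∃ j, (i : ℕ) = j + 1 := ⟨i - 1, by omega⟩
  rw [curry_blockTri_mulVec_schurExtension hki.le, if_pos (by omega), hj,
    schurExtension_succ (by omega), mulVec_neg, mulVec_mulVec,
    mul_nonsing_inv _ ((isUnit_iff_isUnit_det _).1 (hj ▸ hi)), one_mulVec, Nat.add_sub_cancel,
    neg_add_cancel]

theorem blockVec_schurExtension_dotProduct_blockTri_mulVec (hk : k < N)
    (hinv : ∀ j, k < j → j < N → IsUnit (bwdD N b c j)) :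
    blockVec N (schurExtension N b c k x) ⬝ᵥ
        (blockTri N n b c *ᵥ blockVec N (schurExtension N b c k x)) =
      x ⬝ᵥ (bwdD N b c k *ᵥ x) := by
  rw [blockVec, Function.uncurry_dotProduct, Finset.sum_eq_single ⟨k, hk⟩]
  · rw [← blockVec, curry_blockTri_mulVec_schurExtension_self, schurExtension_self]
  · intro i _ hi
    rcases lt_or_gt_of_ne (fun h => hi (Fin.ext h) : (i : ℕ) ≠ k) with hlt | hgt
    · rw [schurExtension_of_lt hlt, zero_dotProduct]
    · rw [← blockVec, curry_blockTri_mulVec_schurExtension_of_lt hgt (hinv i hgt i.isLt),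
        dotProduct_zero]
  · simp

theorem dotProduct_self_le_blockVec_schurExtension (hk : k < N) :
    x ⬝ᵥ x ≤ blockVec N (schurExtension N b c k x) ⬝ᵥ blockVec N (schurExtension N b c k x) := by
  rw [blockVec, Function.uncurry_dotProduct]
  simp only [Function.curry_uncurry]
  calc x ⬝ᵥ x = schurExtension N b c k x k ⬝ᵥ schurExtension N b c k x k := by
        rw [schurExtension_self]
    _ ≤ ∑ i : Fin N, schurExtension N b c k x i ⬝ᵥ schurExtension N b c k x i :=
        Finset.single_le_sum (f := fun i : Fin N => schurExtension N b c k x i ⬝ᵥ _)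
          (fun i _ => dotProduct_self_star_nonneg _) (Finset.mem_univ ⟨k, hk⟩)

end SchurExtension

section Bounds

variable {αL αU : ℝ} {k : ℕ}

theorem le_dotProduct_bwdD_mulVec (hαL : 0 ≤ αL)
    (hlow : ∀ v, αL * (v ⬝ᵥ v) ≤ v ⬝ᵥ (blockTri N n b c *ᵥ v)) (hk : k < N)
    (hinv : ∀ j, k < j → j < N → IsUnit (bwdD N b c j)) (x : Fin n → ℝ) :
    αL * (x ⬝ᵥ x) ≤ x ⬝ᵥ (bwdD N b c k *ᵥ x) := by
  set e := blockVec N (schurExtension N b c k x)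
  calc αL * (x ⬝ᵥ x) ≤ αL * (e ⬝ᵥ e) :=
        mul_le_mul_of_nonneg_left (dotProduct_self_le_blockVec_schurExtension hk) hαL
    _ ≤ e ⬝ᵥ (blockTri N n b c *ᵥ e) := hlow e
    _ = x ⬝ᵥ (bwdD N b c k *ᵥ x) := blockVec_schurExtension_dotProduct_blockTri_mulVec hk hinv

theorem dotProduct_bwdD_mulVec_le
    (hup : ∀ v, v ⬝ᵥ (blockTri N n b c *ᵥ v) ≤ αU * (v ⬝ᵥ v)) (hk : k < N)
    (hsucc : k + 1 < N → (bwdD N b c (k + 1)).PosDef) (x : Fin n → ℝ) :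
    x ⬝ᵥ (bwdD N b c k *ᵥ x) ≤ αU * (x ⬝ᵥ x) := by
  calc x ⬝ᵥ (bwdD N b c k *ᵥ x) ≤ x ⬝ᵥ (b k *ᵥ x) :=
        dotProduct_bwdD_mulVec_le_dotProduct_mulVec hk hsucc x
    _ = _ := (blockVec_single_dotProduct_blockTri_mulVec hk x).symm
    _ ≤ _ := hup _
    _ = αU * (x ⬝ᵥ x) := by rw [blockVec_single_dotProduct_self hk]

theorem exists_posDef_bwdD_eigenvalues_mem_of_forall_gt (hA : (blockTri N n b c).IsHermitian)
    (hαL : 0 < αL) (hlow : ∀ v, αL * (v ⬝ᵥ v) ≤ v ⬝ᵥ (blockTri N n b c *ᵥ v))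
    (hup : ∀ v, v ⬝ᵥ (blockTri N n b c *ᵥ v) ≤ αU * (v ⬝ᵥ v)) (hk : k < N)
    (hgt : ∀ j, k < j → j < N → (bwdD N b c j).PosDef) :
    ∃ h : (bwdD N b c k).PosDef, ∀ i, αL ≤ h.1.eigenvalues i ∧ h.1.eigenvalues i ≤ αU := by
  have hherm := isHermitian_bwdD hA hk fun h => (hgt (k + 1) k.lt_succ_self h).1
  have hL := (hherm.le_eigenvalues_iff αL).2 <|
    le_dotProduct_bwdD_mulVec hαL.le hlow hk fun j hkj hj => (hgt j hkj hj).isUnit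
  have hU := (hherm.eigenvalues_le_iff αU).2 <|
    dotProduct_bwdD_mulVec_le hup hk (hgt (k + 1) k.lt_succ_self)
  exact ⟨hherm.posDef_iff_eigenvalues_pos.2 fun i => hαL.trans_le (hL i), fun i => ⟨hL i, hU i⟩⟩

end Bounds

end BlockTridiagonal

theorem stmt5_general (N n : ℕ)
    (b c : ℕ → Matrix (Fin n) (Fin n) ℝ)
    (A : Matrix (Fin N × Fin n) (Fin N × Fin n) ℝ) (hAdef : A = blockTri N n b c)
    (hA : A.PosDef)
    (αL αU : ℝ) (hαL : 0 < αL)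
    (hbd : ∀ i, αL ≤ hA.1.eigenvalues i ∧ hA.1.eigenvalues i ≤ αU) :
    ∀ k < N, ∃ h : (bwdD N b c k).PosDef,
      ∀ i, αL ≤ h.1.eigenvalues i ∧ h.1.eigenvalues i ≤ αU := by
  subst hAdef
  have hlow := (hA.1.le_eigenvalues_iff αL).1 fun i => (hbd i).1
  have hup := (hA.1.eigenvalues_le_iff αU).1 fun i => (hbd i).2
  intro k hk
  induction hd : N - k using Nat.strong_induction_on generalizing k with
  | _ d ih =>
    exact exists_posDef_bwdD_eigenvalues_mem_of_forall_gt hA.1 hαL hlow hup hk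
      fun j hkj hj => (ih (N - j) (by omega) j hj rfl).fst

/-- If the symmetric positive definite block tridiagonal matrix `A` has all
eigenvalues in `[αL, αU]` with `0 < αL`, then every backward Schur complement `d_k`
(`d_{N-1} = b_{N-1}`, `d_k = b_k − c_{k+1}ᵀ d_{k+1}⁻¹ c_{k+1}`, 0-based) is symmetric
positive definite with all eigenvalues in `[αL, αU]`. -/
theorem stmt5 (N n : ℕ) [NeZero N] [NeZero n]
    (b c : ℕ → Matrix (Fin n) (Fin n) ℝ)
    (A : Matrix (Fin N × Fin n) (Fin N × Fin n) ℝ) (hAdef : A = blockTri N n b c)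
    (hA : A.PosDef)
    (αL αU : ℝ) (hαL : 0 < αL)
    (hbd : ∀ i, αL ≤ hA.1.eigenvalues i ∧ hA.1.eigenvalues i ≤ αU) :
    ∀ k < N, ∃ h : (bwdD N b c k).PosDef,
      ∀ i, αL ≤ h.1.eigenvalues i ∧ h.1.eigenvalues i ≤ αU :=
  stmt5_general N n b c A hAdef hA αL αU hαL hbd
end
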